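/- Let A₀, A₁ be real symmetric n×n matrices and β₀, β₁ ∈ ℝ. Suppose there exists x̄ ∈ ℝⁿ with x̄ᵀA₁x̄ < β₁. Then the implication (xᵀA₁x ≤ β₁ ⟹ xᵀA₀x ≥ β₀ for all x ∈ ℝⁿ) holds if and only if there exists t ≥ 0 such that A₀ + tA₁ is positive semidefinite and β₀ + tβ₁ ≤ 0. -/

import Mathlib

/-!
By Dines' theorem the joint range `{(xᵀA₀x, xᵀA₁x)}` is a convex cone in the plane. Closure under
addition: the curve `P θ = (Q₀, Q₁) (cos θ • x + sin θ • y)` satisfies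
`P θ + P (θ + π / 2) = P 0 + P (π / 2)`, so by the intermediate value theorem some `P θ` lies on
the ray through `P 0 + P (π / 2)`. A line separating this cone from the open quadrant
`(-∞, β₀) × (-∞, β₁)` has nonnegative coefficients `c₀, c₁`; the Slater point forces `c₀ > 0`,
and `t = c₁ / c₀` is the multiplier.
-/

open Matrix Real

namespace QuadraticMap

variable {R M N : Type*} [CommRing R] [AddCommGroup M] [Module R M] [AddCommGroup N] [Module R N]

theorem map_smul_add_smul (Q : QuadraticMap R M N) (a b : R) (x y : M) :
    Q (a • x + b • y) = (a * a) • Q x + (b * b) • Q y + (a * b) • polar Q x y := by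
  rw [QuadraticMap.map_add Q, Q.map_smul, Q.map_smul, polar_smul_left, polar_smul_right, smul_smul]

theorem map_smul_add_smul_add_map_neg_smul_add_smul (Q : QuadraticMap R M N) (a b : R)
    (x y : M) : Q (a • x + b • y) + Q ((-b) • x + a • y) = (a * a + b * b) • (Q x + Q y) := by
  simp only [map_smul_add_smul, add_smul, smul_add]
  rw [show -b * a = -(a * b) by ring, neg_smul, neg_mul_neg]
  abel

end QuadraticMap

theorem exists_nonneg_smul_eq_of_cross_eq_zero {s p : ℝ × ℝ} (hcross : s.1 * p.2 = s.2 * p.1)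
    (hinner : 0 < s.1 * p.1 + s.2 * p.2) : ∃ c : ℝ, 0 ≤ c ∧ c • p = s := by
  refine ⟨(s.1 ^ 2 + s.2 ^ 2) / (s.1 * p.1 + s.2 * p.2), by positivity, ?_⟩
  ext <;> simp only [Prod.smul_fst, Prod.smul_snd, smul_eq_mul] <;> field_simp
  · linear_combination (-s.2) * hcross
  · linear_combination s.1 * hcross

/-- The cross product with `s` is odd under `θ ↦ θ + a`, so it vanishes somewhere; there both
`P θ` and `P (θ + a)` are parallel to `s`, and one of them points in the direction of `s`. -/
theorem exists_nonneg_smul_eq_of_forall_add_eq {P : ℝ → ℝ × ℝ} (hP : Continuous P) {a : ℝ}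
    {s : ℝ × ℝ} (hsum : ∀ θ, P θ + P (θ + a) = s) : ∃ θ, ∃ c : ℝ, 0 ≤ c ∧ c • P θ = s := by
  by_cases hs : s = 0
  · exact ⟨0, 0, le_rfl, by simp [hs]⟩
  let cross : ℝ × ℝ → ℝ := fun p => s.1 * p.2 - s.2 * p.1
  let inner : ℝ × ℝ → ℝ := fun p => s.1 * p.1 + s.2 * p.2
  have hsum₁ θ : (P θ).1 + (P (θ + a)).1 = s.1 := by rw [← hsum θ, Prod.fst_add]
  have hsum₂ θ : (P θ).2 + (P (θ + a)).2 = s.2 := by rw [← hsum θ, Prod.snd_add]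
  have hcross_sum θ : cross (P θ) + cross (P (θ + a)) = 0 := by
    linear_combination s.1 * hsum₂ θ - s.2 * hsum₁ θ
  obtain ⟨θ, -, hθ⟩ : ∃ θ ∈ Set.uIcc 0 a, cross (P θ) = 0 := by
    refine intermediate_value_uIcc (by fun_prop) ?_
    have h := hcross_sum 0
    rw [zero_add] at h
    rcases le_total (cross (P 0)) 0 with h₀ | h₀
    · exact Set.mem_uIcc.2 (Or.inl ⟨h₀, by linarith⟩)
    · exact Set.mem_uIcc.2 (Or.inr ⟨by linarith, h₀⟩)
  have hinner_sum : 0 < inner (P θ) + inner (P (θ + a)) := by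
    have hs' : s.1 ≠ 0 ∨ s.2 ≠ 0 := by
      contrapose! hs
      exact Prod.ext hs.1 hs.2
    calc 0 < s.1 ^ 2 + s.2 ^ 2 := by rcases hs' with h | h <;> positivity
      _ = _ := by linear_combination (-s.1) * hsum₁ θ - s.2 * hsum₂ θ
  obtain ⟨θ', hcross, hinner⟩ : ∃ θ', cross (P θ') = 0 ∧ 0 < inner (P θ') := by
    by_cases h : 0 < inner (P θ)
    · exact ⟨θ, hθ, h⟩
    · exact ⟨θ + a, by linarith [hcross_sum θ], by linarith⟩
  exact ⟨θ', exists_nonneg_smul_eq_of_cross_eq_zero (sub_eq_zero.1 hcross) hinner⟩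

namespace QuadraticForm

variable {V : Type*} [AddCommGroup V] [Module ℝ V] (Q₁ Q₂ : QuadraticForm ℝ V)

theorem smul_prod_mk_eq_sqrt_smul {c : ℝ} (hc : 0 ≤ c) (x : V) :
    c • (Q₁ x, Q₂ x) = (Q₁ (√c • x), Q₂ (√c • x)) := by
  simp [QuadraticMap.map_smul, ← sq, hc]

theorem exists_prod_mk_eq_add (x y : V) :
    ∃ z, (Q₁ z, Q₂ z) = (Q₁ x, Q₂ x) + (Q₁ y, Q₂ y) := by
  let γ : ℝ → V := fun θ => cos θ • x + sin θ • y
  have hcont : Continuous fun θ => (Q₁ (γ θ), Q₂ (γ θ)) := by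
    simp only [γ, QuadraticMap.map_smul_add_smul, smul_eq_mul]
    fun_prop
  have hsum θ : (Q₁ (γ θ), Q₂ (γ θ)) + (Q₁ (γ (θ + π / 2)), Q₂ (γ (θ + π / 2))) =
      (Q₁ x, Q₂ x) + (Q₁ y, Q₂ y) := by
    simp only [γ, cos_add_pi_div_two, sin_add_pi_div_two, Prod.mk_add_mk,
      QuadraticMap.map_smul_add_smul_add_map_neg_smul_add_smul, ← sq, cos_sq_add_sin_sq, one_smul]
  obtain ⟨θ, c, hc, hcθ⟩ := exists_nonneg_smul_eq_of_forall_add_eq hcont hsum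
  exact ⟨√c • γ θ, by rw [← hcθ, smul_prod_mk_eq_sqrt_smul Q₁ Q₂ hc]⟩

/-- Dines' theorem: the joint range of two real quadratic forms is a convex cone. -/
def jointRange : PointedCone ℝ (ℝ × ℝ) where
  carrier := Set.range fun x => (Q₁ x, Q₂ x)
  add_mem' := by
    rintro _ _ ⟨x, rfl⟩ ⟨y, rfl⟩
    exact exists_prod_mk_eq_add Q₁ Q₂ x y
  zero_mem' := ⟨0, by simp⟩
  smul_mem' := by
    rintro c _ ⟨x, rfl⟩
    exact ⟨_, (smul_prod_mk_eq_sqrt_smul Q₁ Q₂ c.2 x).symm⟩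

theorem mem_jointRange (x : V) : (Q₁ x, Q₂ x) ∈ jointRange Q₁ Q₂ := ⟨x, rfl⟩

end QuadraticForm

theorem nonpos_of_forall_add_mul_le {a b c : ℝ} (h : ∀ r : ℝ, 0 ≤ r → a + r * c ≤ b) :
    c ≤ 0 := by
  by_contra! hc
  have := h ((|b - a| + 1) / c) (by positivity)
  rw [div_mul_cancel₀ _ hc.ne'] at this
  linarith [le_abs_self (b - a)]

theorem StrongDual.apply_prod (f : StrongDual ℝ (ℝ × ℝ)) (p : ℝ × ℝ) :
    f p = f (1, 0) * p.1 + f (0, 1) * p.2 := by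
  conv_lhs => rw [show p = p.1 • ((1 : ℝ), (0 : ℝ)) + p.2 • ((0 : ℝ), (1 : ℝ)) by ext <;> simp]
  rw [map_add, map_smul, map_smul, smul_eq_mul, smul_eq_mul, mul_comm, mul_comm p.2]

namespace PointedCone

theorem apply_nonneg_of_forall_le {E : Type*} [AddCommGroup E] [Module ℝ E]
    (K : PointedCone ℝ E) (f : E →ₗ[ℝ] ℝ) {u : ℝ} (h : ∀ p ∈ K, u ≤ f p) {p : E} (hp : p ∈ K) :
    0 ≤ f p := by
  suffices -f p ≤ 0 by linarith
  refine nonpos_of_forall_add_mul_le (a := -f p) (b := -u) fun r hr => ?_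
  have := h _ (K.smul_mem (by linarith : (0 : ℝ) ≤ 1 + r) hp)
  rw [map_smul, smul_eq_mul] at this
  linarith

theorem exists_separating_nonneg_coeffs (K : PointedCone ℝ (ℝ × ℝ)) (β : ℝ × ℝ)
    (hK : ∀ p ∈ K, p.2 < β.2 → β.1 ≤ p.1) :
    ∃ c₀ c₁ : ℝ, 0 ≤ c₀ ∧ 0 ≤ c₁ ∧ 0 < c₀ + c₁ ∧ (∀ p ∈ K, 0 ≤ c₀ * p.1 + c₁ * p.2) ∧
      c₀ * β.1 + c₁ * β.2 ≤ 0 := by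
  set O := Set.Iio β.1 ×ˢ Set.Iio β.2
  have hdisj : Disjoint O K := by
    rw [Set.disjoint_left]
    rintro p ⟨hp₁, hp₂⟩ hp
    exact (hK p hp hp₂).not_gt hp₁
  obtain ⟨f, u, hfO, hfK⟩ := geometric_hahn_banach_open ((convex_Iio _).prod (convex_Iio _))
    (isOpen_Iio.prod isOpen_Iio) K.convex hdisj
  have hu : u ≤ 0 := by simpa using hfK 0 K.zero_mem
  have hβ : f β ≤ u := by
    have hβO : β ∈ closure O := by
      rw [closure_prod_eq, closure_Iio, closure_Iio]
      exact ⟨Set.mem_Iic.2 le_rfl, Set.mem_Iic.2 le_rfl⟩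
    exact closure_lt_subset_le f.continuous continuous_const (closure_mono hfO hβO)
  have hO (r₀ r₁ : ℝ) (hr₀ : 0 ≤ r₀) (hr₁ : 0 ≤ r₁) :
      f (β.1 - 1, β.2 - 1) + r₀ * (-f (1, 0)) + r₁ * (-f (0, 1)) < u := by
    have := hfO (β.1 - 1 - r₀, β.2 - 1 - r₁) ⟨by simp; linarith, by simp; linarith⟩
    rw [StrongDual.apply_prod] at this ⊢
    linarith
  have hc₀ : 0 ≤ f (1, 0) := neg_nonpos.1 <|
    nonpos_of_forall_add_mul_le fun r hr => by simpa using (hO r 0 hr le_rfl).le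
  have hc₁ : 0 ≤ f (0, 1) := neg_nonpos.1 <|
    nonpos_of_forall_add_mul_le fun r hr => by simpa using (hO 0 r le_rfl hr).le
  refine ⟨f (1, 0), f (0, 1), hc₀, hc₁, ?_, fun p hp => ?_, ?_⟩
  · by_contra! h
    have := hO 0 0 le_rfl le_rfl
    rw [StrongDual.apply_prod, show f (1, 0) = 0 by linarith, show f (0, 1) = 0 by linarith]
      at this
    linarith
  · rw [← StrongDual.apply_prod]
    exact K.apply_nonneg_of_forall_le f.toLinearMap hfK hp
  · rw [← StrongDual.apply_prod]
    exact hβ.trans hu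

theorem exists_multiplier_of_slater (K : PointedCone ℝ (ℝ × ℝ)) (β : ℝ × ℝ)
    (hK : ∀ p ∈ K, p.2 ≤ β.2 → β.1 ≤ p.1) (hslater : ∃ p ∈ K, p.2 < β.2) :
    ∃ t : ℝ, 0 ≤ t ∧ (∀ p ∈ K, 0 ≤ p.1 + t * p.2) ∧ β.1 + t * β.2 ≤ 0 := by
  obtain ⟨c₀, c₁, hc₀, hc₁, hc, hcK, hcβ⟩ :=
    K.exists_separating_nonneg_coeffs β fun p hp h => hK p hp h.le
  obtain ⟨p, hp, hpβ⟩ := hslater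
  have hc₀_pos : 0 < c₀ := by
    refine hc₀.lt_of_ne' fun h₀ => ?_
    have := hcK p hp
    rw [h₀] at this hcβ hc
    nlinarith [mul_pos hc (sub_pos.2 hpβ)]
  refine ⟨c₁ / c₀, by positivity, fun q hq => ?_, ?_⟩
  · rw [show q.1 + c₁ / c₀ * q.2 = (c₀ * q.1 + c₁ * q.2) / c₀ by field_simp]
    exact div_nonneg (hcK q hq) hc₀
  · rw [show β.1 + c₁ / c₀ * β.2 = (c₀ * β.1 + c₁ * β.2) / c₀ by field_simp]
    exact div_nonpos_of_nonpos_of_nonneg hcβ hc₀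

end PointedCone

@[simp]
theorem Matrix.toQuadraticForm'_apply {R n : Type*} [CommRing R] [Fintype n] [DecidableEq n]
    (M : Matrix n n R) (x : n → R) : M.toQuadraticForm' x = x ⬝ᵥ M *ᵥ x :=
  toLinearMap₂'_apply' M x x

theorem Matrix.posSemidef_add_smul_iff {n : Type*} [Fintype n] {A B : Matrix n n ℝ}
    (hA : A.IsSymm) (hB : B.IsSymm) (t : ℝ) :
    (A + t • B).PosSemidef ↔ ∀ x, 0 ≤ x ⬝ᵥ A *ᵥ x + t * (x ⬝ᵥ B *ᵥ x) := by
  simp [posSemidef_iff_dotProduct_mulVec, isHermitian_iff_isSymm, hA.add (hB.smul t),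
    add_mulVec, smul_mulVec, dotProduct_add, dotProduct_smul]

theorem homogeneous_s_lemma (n : ℕ) (A₀ A₁ : Matrix (Fin n) (Fin n) ℝ)
    (h₀ : A₀.IsSymm) (h₁ : A₁.IsSymm) (β₀ β₁ : ℝ)
    (hslater : ∃ xbar : Fin n → ℝ, xbar ⬝ᵥ A₁ *ᵥ xbar < β₁) :
    (∀ x : Fin n → ℝ, x ⬝ᵥ A₁ *ᵥ x ≤ β₁ → β₀ ≤ x ⬝ᵥ A₀ *ᵥ x) ↔
    (∃ t : ℝ, 0 ≤ t ∧ (A₀ + t • A₁).PosSemidef ∧ β₀ + t * β₁ ≤ 0) := by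
  simp_rw [posSemidef_add_smul_iff h₀ h₁]
  constructor
  · intro hC
    obtain ⟨xbar, hxbar⟩ := hslater
    obtain ⟨t, ht, hK, hβ⟩ :=
      (QuadraticForm.jointRange A₀.toQuadraticForm' A₁.toQuadraticForm').exists_multiplier_of_slater
        (β₀, β₁) (by rintro _ ⟨x, rfl⟩; simpa using hC x)
        ⟨_, QuadraticForm.mem_jointRange _ _ xbar, by simpa⟩
    exact ⟨t, ht, fun x => by simpa using hK _ (QuadraticForm.mem_jointRange _ _ x), hβ⟩
  · rintro ⟨t, ht, hpsd, hβ⟩ x hx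
    nlinarith [hpsd x, mul_le_mul_of_nonneg_left hx ht]
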